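/- arXiv:2003.01590 — 4 statements merged into one kernel-verified Lean document; each statement's English description precedes it below -/
import Mathlib

section
/- Let g : ℝ → ℝ be a 1-Lipschitz function. For every t ∈ ℝ and every r ≥ 0, there exists a unique η ∈ [0, r/2] such that the Euclidean distance between the points (t+η, g(t+η)) and (t−η, g(t−η)) in ℝ² equals r. -/
/-- For a 1-Lipschitz `g : ℝ → ℝ`, every `t` and `r ≥ 0` admit a unique `η ∈ [0, r/2]`
with the Euclidean distance between `(t+η, g(t+η))` and `(t-η, g(t-η))` equal to `r`. -/
theorem stmt0 (g : ℝ → ℝ) (hg : LipschitzWith 1 g) (t r : ℝ) (hr : 0 ≤ r) :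
    ∃! η : ℝ, η ∈ Set.Icc 0 (r / 2) ∧
      Real.sqrt (((t + η) - (t - η)) ^ 2 + (g (t + η) - g (t - η)) ^ 2) = r := by
  have hlip : ∀ x y : ℝ, |g x - g y| ≤ |x - y| := by
    intro x y
    have := hg.dist_le_mul x y
    simpa [Real.dist_eq] using this
  set d : ℝ → ℝ := fun η => g (t + η) - g (t - η) with hd
  set h : ℝ → ℝ := fun η => 4 * η ^ 2 + (d η) ^ 2 with hh
  -- strict monotonicity on [0, ∞)
  have hmono : ∀ a b : ℝ, 0 ≤ a → a < b → h a < h b := by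
    intro a b ha hab
    have hda : |d a| ≤ 2 * a := by
      have := hlip (t + a) (t - a)
      have h2 : |(t + a) - (t - a)| = 2 * a := by
        rw [abs_of_nonneg (by linarith)]; ring
      simp only [hd]
      calc |g (t + a) - g (t - a)| ≤ |(t + a) - (t - a)| := this
        _ = 2 * a := h2
    have hde : |d b - d a| ≤ 2 * (b - a) := by
      have h1 := hlip (t + b) (t + a)
      have h2 := hlip (t - a) (t - b)
      have e1 : |(t + b) - (t + a)| = b - a := by
        rw [show (t + b) - (t + a) = b - a by ring, abs_of_nonneg (by linarith)]
      have e2 : |(t - a) - (t - b)| = b - a := by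
        rw [show (t - a) - (t - b) = b - a by ring, abs_of_nonneg (by linarith)]
      have : d b - d a = (g (t + b) - g (t + a)) + (g (t - a) - g (t - b)) := by
        simp only [hd]; ring
      rw [this]
      calc |(g (t + b) - g (t + a)) + (g (t - a) - g (t - b))|
          ≤ |g (t + b) - g (t + a)| + |g (t - a) - g (t - b)| := abs_add_le _ _
        _ ≤ (b - a) + (b - a) := by rw [e1] at h1; rw [e2] at h2; linarith
        _ = 2 * (b - a) := by ring
    have hda' := abs_le.mp hda
    have hde' := abs_le.mp hde
    simp only [hh]
    nlinarith [sq_nonneg (d b - d a), sq_nonneg (b - a)]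
  have hcont : Continuous h := by
    have : Continuous d := ((hg.continuous.comp (continuous_const.add continuous_id)).sub
      (hg.continuous.comp (continuous_const.sub continuous_id)))
    exact (continuous_const.mul (continuous_pow 2)).add (this.pow 2)
  have h0 : h 0 = 0 := by simp [hh, hd]
  have hr2 : r ^ 2 ≤ h (r / 2) := by
    simp only [hh]
    nlinarith [sq_nonneg (d (r / 2))]
  -- existence via IVT
  have hiv := intermediate_value_Icc (by linarith : (0:ℝ) ≤ r / 2) hcont.continuousOn
  have hmem : r ^ 2 ∈ Set.Icc (h 0) (h (r / 2)) := by
    constructor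
    · rw [h0]; positivity
    · exact hr2
  obtain ⟨η, hηmem, hηeq⟩ := hiv hmem
  have key : ∀ x : ℝ, Real.sqrt (((t + x) - (t - x)) ^ 2 + (g (t + x) - g (t - x)) ^ 2)
      = Real.sqrt (h x) := by
    intro x
    congr 1
    simp only [hh, hd]
    ring
  refine ⟨η, ⟨hηmem, ?_⟩, ?_⟩
  · rw [key, hηeq, Real.sqrt_sq hr]
  · rintro η' ⟨hη'mem, hη'eq⟩
    rw [key] at hη'eq
    have hnn : 0 ≤ h η' := by
      simp only [hh]; positivity
    have hη'sq : h η' = r ^ 2 := by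
      have := congrArg (· ^ 2) hη'eq
      simpa [Real.sq_sqrt hnn] using this
    have heq : h η' = h η := by rw [hη'sq, hηeq]
    by_contra hne
    rcases lt_or_gt_of_ne hne with hlt | hgt
    · exact absurd heq (ne_of_lt (hmono η' η hη'mem.1 hlt))
    · exact absurd heq.symm (ne_of_lt (hmono η η' hηmem.1 hgt))
end

section
/- Let g : ℝ → ℝ be 1-Lipschitz, and for t ∈ ℝ, r ≥ 0 let η_r(t) ∈ [0, r/2] denote the unique value with ((t+η_r(t)) − (t−η_r(t)))² + (g(t+η_r(t)) − g(t−η_r(t)))² = r². Then the map (r,t) ↦ η_r(t) is continuous on [0,∞) × ℝ. -/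
open Filter Topology

private noncomputable def Fg (g : ℝ → ℝ) (t x : ℝ) : ℝ :=
  ((t + x) - (t - x)) ^ 2 + (g (t + x) - g (t - x)) ^ 2

private lemma Fg_cont (g : ℝ → ℝ) (hg : LipschitzWith 1 g) :
    Continuous (fun p : ℝ × ℝ => Fg g p.1 p.2) := by
  have := hg.continuous
  unfold Fg
  fun_prop

private lemma lip_abs (g : ℝ → ℝ) (hg : LipschitzWith 1 g) (a b : ℝ) :
    |g a - g b| ≤ |a - b| := by
  have := hg.dist_le_mul a b
  simpa [Real.dist_eq] using this

private lemma Fg_mono (g : ℝ → ℝ) (hg : LipschitzWith 1 g) (t x y : ℝ)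
    (hx : 0 ≤ x) (hxy : x < y) : Fg g t x < Fg g t y := by
  have h1 := abs_le.1 (lip_abs g hg (t + y) (t + x))
  have h2 := abs_le.1 (lip_abs g hg (t - x) (t - y))
  have h3 := abs_le.1 (lip_abs g hg (t + x) (t - x))
  unfold Fg
  have ha : |t + y - (t + x)| = y - x := by rw [abs_of_nonneg] <;> linarith
  have hb : |t - x - (t - y)| = y - x := by rw [abs_of_nonneg] <;> linarith
  have hc : |t + x - (t - x)| = 2 * x := by rw [abs_of_nonneg] <;> linarith
  rw [ha] at h1; rw [hb] at h2; rw [hc] at h3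
  nlinarith [sq_nonneg (y - x), sq_nonneg (g (t+y) - g (t+x) + (g (t-x) - g (t-y))),
    mul_nonneg (by linarith : (0:ℝ) ≤ 2*x + (g (t+x) - g (t-x)))
      (by linarith : (0:ℝ) ≤ 2*(y-x) + (g (t+y) - g (t+x) + (g (t-x) - g (t-y)))),
    mul_nonneg (by linarith : (0:ℝ) ≤ 2*x - (g (t+x) - g (t-x)))
      (by linarith : (0:ℝ) ≤ 2*(y-x) - (g (t+y) - g (t+x) + (g (t-x) - g (t-y))))]

private lemma Fg_mono' (g : ℝ → ℝ) (hg : LipschitzWith 1 g) (t x y : ℝ)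
    (hx : 0 ≤ x) (hxy : x ≤ y) : Fg g t x ≤ Fg g t y := by
  rcases eq_or_lt_of_le hxy with h | h
  · rw [h]
  · exact (Fg_mono g hg t x y hx h).le

/-- For a 1-Lipschitz `g : ℝ → ℝ`, if `η r t` denotes the unique value in `[0, r/2]` with
`((t+η) - (t-η))² + (g(t+η) - g(t-η))² = r²`, then `(r, t) ↦ η r t` is continuous on
`[0, ∞) × ℝ`. -/
theorem stmt2 (g : ℝ → ℝ) (hg : LipschitzWith 1 g) (η : ℝ → ℝ → ℝ)
    (hmem : ∀ r t : ℝ, 0 ≤ r → η r t ∈ Set.Icc 0 (r / 2))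
    (heq : ∀ r t : ℝ, 0 ≤ r →
      ((t + η r t) - (t - η r t)) ^ 2 + (g (t + η r t) - g (t - η r t)) ^ 2 = r ^ 2) :
    ContinuousOn (fun p : ℝ × ℝ => η p.1 p.2) (Set.Ici 0 ×ˢ Set.univ) := by
  have hFeq : ∀ r t : ℝ, 0 ≤ r → Fg g t (η r t) = r ^ 2 := fun r t hr => heq r t hr
  have hFc := Fg_cont g hg
  rintro ⟨r₀, t₀⟩ hp
  have hr₀ : (0:ℝ) ≤ r₀ := hp.1
  set x₀ := η r₀ t₀ with hx₀def
  have hx₀ : 0 ≤ x₀ := (hmem r₀ t₀ hr₀).1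
  rw [ContinuousWithinAt, Metric.tendsto_nhds]
  intro ε hε
  -- upper bound event
  have hUc : ContinuousAt (fun q : ℝ × ℝ => q.1 ^ 2) (r₀, t₀) := by fun_prop
  have hU2c : ContinuousAt (fun q : ℝ × ℝ => Fg g q.2 (x₀ + ε / 2)) (r₀, t₀) := by
    exact (hFc.comp (continuous_snd.prodMk continuous_const)).continuousAt
  have hUlt : r₀ ^ 2 < Fg g t₀ (x₀ + ε / 2) := by
    rw [← hFeq r₀ t₀ hr₀]
    exact Fg_mono g hg t₀ x₀ (x₀ + ε / 2) hx₀ (by linarith)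
  have hU : ∀ᶠ q : ℝ × ℝ in 𝓝 (r₀, t₀), q.1 ^ 2 < Fg g q.2 (x₀ + ε / 2) :=
    hUc.eventually_lt hU2c hUlt
  have hmemev : ∀ᶠ q : ℝ × ℝ in 𝓝[Set.Ici 0 ×ˢ Set.univ] (r₀, t₀),
      q ∈ (Set.Ici 0 ×ˢ Set.univ : Set (ℝ × ℝ)) := eventually_mem_nhdsWithin
  have hupper : ∀ᶠ q : ℝ × ℝ in 𝓝[Set.Ici 0 ×ˢ Set.univ] (r₀, t₀),
      η q.1 q.2 < x₀ + ε / 2 := by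
    filter_upwards [hU.filter_mono nhdsWithin_le_nhds, hmemev] with q hq hqm
    by_contra hcon
    push_neg at hcon
    have hr : (0:ℝ) ≤ q.1 := hqm.1
    have := Fg_mono' g hg q.2 (x₀ + ε / 2) (η q.1 q.2) (by linarith) hcon
    rw [hFeq q.1 q.2 hr] at this
    linarith
  by_cases hc : ε ≤ x₀
  · -- need lower bound too
    have hLc : ContinuousAt (fun q : ℝ × ℝ => Fg g q.2 (x₀ - ε / 2)) (r₀, t₀) :=
      (hFc.comp (continuous_snd.prodMk continuous_const)).continuousAt
    have hLlt : Fg g t₀ (x₀ - ε / 2) < r₀ ^ 2 := by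
      rw [← hFeq r₀ t₀ hr₀]
      exact Fg_mono g hg t₀ (x₀ - ε / 2) x₀ (by linarith) (by linarith)
    have hL : ∀ᶠ q : ℝ × ℝ in 𝓝 (r₀, t₀), Fg g q.2 (x₀ - ε / 2) < q.1 ^ 2 :=
      hLc.eventually_lt hUc hLlt
    filter_upwards [hupper, hL.filter_mono nhdsWithin_le_nhds, hmemev] with q hq1 hq2 hqm
    have hr : (0:ℝ) ≤ q.1 := hqm.1
    have hge : (0:ℝ) ≤ η q.1 q.2 := (hmem q.1 q.2 hr).1
    have hlow : x₀ - ε / 2 < η q.1 q.2 := by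
      by_contra hcon
      push_neg at hcon
      have := Fg_mono' g hg q.2 (η q.1 q.2) (x₀ - ε / 2) hge hcon
      rw [hFeq q.1 q.2 hr] at this
      linarith
    rw [Real.dist_eq, abs_lt]
    constructor <;> [skip; skip] <;> simp only [hx₀def] at * <;> linarith
  · push_neg at hc
    filter_upwards [hupper, hmemev] with q hq1 hqm
    have hge : (0:ℝ) ≤ η q.1 q.2 := (hmem q.1 q.2 hqm.1).1
    rw [Real.dist_eq, abs_lt]
    constructor <;> simp only [hx₀def] at * <;> linarith
end

section
/- Let p be an odd prime, and let q be a prime with q ≡ 1 (mod 4) and (p/q) = −1. Then there exist infinitely many positive integers k such that 2kp + 1 = q·r for some prime r distinct from q. -/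
/-!
Since `q` is coprime to `2p`, it is invertible modulo `2p`, and Dirichlet's theorem supplies
arbitrarily large primes `r ≡ q⁻¹ (mod 2p)`. Then `q r ≡ 1 (mod 2p)`, i.e. `q r = 2kp + 1`,
and `k` grows with `r`.
-/

theorem exists_prime_gt_and_mul_modEq_one {q m : ℕ} (hm : m ≠ 0) (h : q.Coprime m) (n : ℕ) :
    ∃ r > n, r.Prime ∧ q * r ≡ 1 [MOD m] := by
  have : NeZero m := ⟨hm⟩
  obtain ⟨r, hrn, hr, hrq⟩ :=
    Nat.forall_exists_prime_gt_and_eq_mod (ZMod.unitOfCoprime q h)⁻¹.isUnit n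
  refine ⟨r, hrn, hr, (ZMod.natCast_eq_natCast_iff _ _ _).mp ?_⟩
  push_cast
  rw [hrq, ← ZMod.coe_unitOfCoprime q h, Units.mul_inv]

theorem infinite_setOf_mul_add_one_eq_mul_prime {q m : ℕ} (hq : 1 < q) (h : q.Coprime m) :
    {k : ℕ | 0 < k ∧ ∃ r : ℕ, r.Prime ∧ r ≠ q ∧ m * k + 1 = q * r}.Infinite := by
  have hm : m ≠ 0 := by
    rintro rfl
    exact hq.ne' (Nat.coprime_zero_right q |>.mp h)
  refine Set.infinite_of_forall_exists_gt fun n => ?_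
  obtain ⟨r, hrn, hr, hqr⟩ := exists_prime_gt_and_mul_modEq_one hm h (m * n + q)
  have hqr_pos : 1 ≤ q * r := Nat.mul_pos (by omega) hr.pos
  obtain ⟨k, hk⟩ := (Nat.modEq_iff_dvd' hqr_pos).mp hqr.symm
  have hqr_eq : m * k + 1 = q * r := by omega
  have hnk : n < k := by
    have : m * n < m * k := by nlinarith
    exact Nat.lt_of_mul_lt_mul_left this
  exact ⟨k, ⟨by omega, r, hr, by omega, hqr_eq⟩, hnk⟩

theorem stmt12_general (p q : ℕ)
    (hq : q.Prime) (hq4 : q % 4 = 1) (hns : ¬ IsSquare ((p : ZMod q))) :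
    {k : ℕ | 0 < k ∧ ∃ r : ℕ, r.Prime ∧ r ≠ q ∧ 2 * k * p + 1 = q * r}.Infinite := by
  have hq_two : ¬ q ∣ 2 := fun h => by
    have := Nat.le_of_dvd two_pos h
    have := hq.two_le
    omega
  have hq_p : ¬ q ∣ p := fun h => hns ⟨0, by rw [(ZMod.natCast_eq_zero_iff p q).mpr h, mul_zero]⟩
  have hcop : q.Coprime (2 * p) :=
    hq.coprime_iff_not_dvd.mpr fun h => (hq.dvd_mul.mp h).elim hq_two hq_p
  simpa only [mul_right_comm 2 _ p] using infinite_setOf_mul_add_one_eq_mul_prime hq.one_lt hcop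

/-- If `p` is an odd prime and `q ≡ 1 (mod 4)` a prime with `p` not a quadratic residue
mod `q`, then there are infinitely many positive integers `k` with `2kp + 1 = q·r` for
some prime `r ≠ q`. -/
theorem stmt12 (p q : ℕ) (hp : p.Prime) (hpodd : p ≠ 2)
    (hq : q.Prime) (hq4 : q % 4 = 1) (hns : ¬ IsSquare ((p : ZMod q))) :
    {k : ℕ | 0 < k ∧ ∃ r : ℕ, r.Prime ∧ r ≠ q ∧ 2 * k * p + 1 = q * r}.Infinite :=
  stmt12_general p q hq hq4 hns
end

section
/- Let Q be the 2k×2k tridiagonal integer matrix with diagonal entries all −2 except entries (k,k) and (k+1,k+1) which equal ±p − 1, off-diagonal entries Q_{i,i+1} = Q_{i+1,i} = 1 except Q_{k,k+1} = Q_{k+1,k} = ±p (same sign throughout), where p is an odd prime and k ≥ 1. Then the (1,1) entry of −Q⁻¹ equals (qr ∓ p)/(qr) where qr = |det Q| = 2kp ± 1. -/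
open scoped Matrix

open Matrix in
private def tri (a b : ℕ → ℚ) (n : ℕ) : Matrix (Fin n) (Fin n) ℚ :=
  Matrix.of fun i j =>
    if (i : ℕ) = (j : ℕ) then a (i : ℕ)
    else if (i : ℕ) + 1 = (j : ℕ) then b (i : ℕ)
    else if (j : ℕ) + 1 = (i : ℕ) then b (j : ℕ) else 0

private def cont (a b : ℕ → ℚ) : ℕ → ℚ
  | 0 => 1
  | 1 => a 0
  | (n+2) => a (n+1) * cont a b (n+1) - (b n)^2 * cont a b n

private lemma cont_step (a b : ℕ → ℚ) (n : ℕ) :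
    cont a b (n+2) = a (n+1) * cont a b (n+1) - (b n)^2 * cont a b n := rfl

private lemma tri_rec (a b : ℕ → ℚ) (n : ℕ) :
    (tri a b (n+2)).det = a (n+1) * (tri a b (n+1)).det - (b n)^2 * (tri a b n).det := by
  have hjn : (0:ℕ) ≤ n := Nat.zero_le n
  set jn : Fin (n+2) := ⟨n, by omega⟩ with hjndef
  have hjnval : (jn : ℕ) = n := rfl
  have hsv : ∀ x : Fin (n+1), ((jn.succAbove x : Fin (n+2)) : ℕ) =
      if (x:ℕ) < n then (x:ℕ) else (x:ℕ)+1 := by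
    intro x
    rw [Fin.succAbove]
    split_ifs with h1 h2 h2
    · rfl
    · exact absurd (by simpa [Fin.lt_def] using h1) h2
    · exact absurd (by simpa [Fin.lt_def] using h2) h1
    · rfl
  rw [Matrix.det_succ_row _ (Fin.last (n+1))]
  have hvanish : ∀ j : Fin (n+2), j ∉ ({jn, Fin.last (n+1)} : Finset (Fin (n+2))) →
      (-1:ℚ) ^ ((Fin.last (n+1) : ℕ) + (j : ℕ)) * (tri a b (n+2)) (Fin.last (n+1)) j *
        ((tri a b (n+2)).submatrix (Fin.last (n+1)).succAbove j.succAbove).det = 0 := by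
    intro j hj
    simp only [Finset.mem_insert, Finset.mem_singleton] at hj
    push_neg at hj
    have h1 : (j : ℕ) ≠ n := fun h => hj.1 (Fin.ext (h.trans hjnval.symm))
    have h2 : (j : ℕ) ≠ n+1 := fun h => hj.2 (Fin.ext (by simpa using h))
    have hentry : (tri a b (n+2)) (Fin.last (n+1)) j = 0 := by
      simp only [tri, Matrix.of_apply, Fin.val_last]
      rw [if_neg (by omega), if_neg (by omega), if_neg (by omega)]
    rw [hentry]; ring
  rw [← Finset.sum_subset (Finset.subset_univ ({jn, Fin.last (n+1)} : Finset (Fin (n+2))))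
    (fun x _ hx => hvanish x hx)]
  rw [Finset.sum_pair (by
    intro h
    have := congrArg (Fin.val) h
    simp [hjnval] at this)]
  -- entries
  have hjl_entry : (tri a b (n+2)) (Fin.last (n+1)) (Fin.last (n+1)) = a (n+1) := by
    simp [tri]
  have hjn_entry : (tri a b (n+2)) (Fin.last (n+1)) jn = b n := by
    simp only [tri, Matrix.of_apply, Fin.val_last, hjnval]
    rw [if_neg (by omega), if_neg (by omega)]
    simp
  -- submatrix at (last, last)
  have hsub_ll : (tri a b (n+2)).submatrix (Fin.last (n+1)).succAbove (Fin.last (n+1)).succAbove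
      = tri a b (n+1) := by
    ext i j
    simp only [Fin.succAbove_last, Matrix.submatrix_apply, tri, Matrix.of_apply,
      Fin.coe_castSucc]
  -- submatrix at (last, jn)
  have hdetN : ((tri a b (n+2)).submatrix (Fin.last (n+1)).succAbove jn.succAbove).det
      = b n * (tri a b n).det := by
    rw [Matrix.det_succ_column _ (Fin.last n)]
    have hcol : ((jn.succAbove (Fin.last n) : Fin (n+2)) : ℕ) = n + 1 := by
      rw [hsv]; simp
    rw [Fintype.sum_eq_single (Fin.last n) (by
      intro i hi
      have hiv : (i : ℕ) ≠ n := fun h => hi (Fin.ext (by simpa using h))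
      have hentry : (tri a b (n+2)).submatrix (Fin.last (n+1)).succAbove jn.succAbove i
          (Fin.last n) = 0 := by
        simp only [Matrix.submatrix_apply, Fin.succAbove_last, tri, Matrix.of_apply,
          Fin.coe_castSucc, hcol]
        have := i.isLt
        rw [if_neg (by omega), if_neg (by omega), if_neg (by omega)]
      rw [hentry]; ring)]
    have hentry : (tri a b (n+2)).submatrix (Fin.last (n+1)).succAbove jn.succAbove
        (Fin.last n) (Fin.last n) = b n := by
      simp only [Matrix.submatrix_apply, Fin.succAbove_last, tri, Matrix.of_apply,
        Fin.coe_castSucc, hcol, Fin.val_last]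
      rw [if_neg (by omega)]
      simp
    have hsub2 : ((tri a b (n+2)).submatrix (Fin.last (n+1)).succAbove jn.succAbove).submatrix
        (Fin.last n).succAbove (Fin.last n).succAbove = tri a b n := by
      ext i j
      have hcj : ((jn.succAbove (Fin.castSucc j) : Fin (n+2)) : ℕ) = (j : ℕ) := by
        rw [hsv]; simp [j.isLt]
      simp only [Matrix.submatrix_apply, Fin.succAbove_last, tri, Matrix.of_apply,
        Fin.coe_castSucc, hcj]
    rw [hentry, hsub2]
    have hsgn : (-1:ℚ) ^ ((Fin.last n : ℕ) + (Fin.last n : ℕ)) = 1 := by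
      simp only [Fin.val_last]
      rw [show n + n = 2*n by ring, pow_mul]; norm_num
    rw [hsgn]; ring
  rw [hjl_entry, hjn_entry, hsub_ll, hdetN]
  have hsgn1 : (-1:ℚ) ^ ((Fin.last (n+1) : ℕ) + (jn : ℕ)) = -1 := by
    simp only [Fin.val_last, hjnval]
    rw [show n + 1 + n = 2*n + 1 by ring, pow_succ, pow_mul]; norm_num
  have hsgn2 : (-1:ℚ) ^ ((Fin.last (n+1) : ℕ) + ((Fin.last (n+1) : Fin (n+2)) : ℕ)) = 1 := by
    simp only [Fin.val_last]
    rw [show (n + 1) + (n + 1) = 2*(n+1) by ring, pow_mul]; norm_num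
  rw [hsgn1, hsgn2]
  ring

private lemma det_tri (a b : ℕ → ℚ) : ∀ n, (tri a b n).det = cont a b n := by
  intro n
  induction n using Nat.strong_induction_on with
  | _ n ih =>
    match n with
    | 0 => simp [cont]
    | 1 =>
      rw [Matrix.det_fin_one]
      simp [tri, cont]
    | (m+2) =>
      rw [tri_rec, ih (m+1) (by omega), ih m (by omega), cont_step]
private def aa (P E : ℚ) (K : ℕ) : ℕ → ℚ := fun i => if i = K ∨ i = K+1 then E*P-1 else -2
private def bb (P E : ℚ) (K : ℕ) : ℕ → ℚ := fun i => if i = K then E*P else 1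

private lemma contL1 (P E : ℚ) (K : ℕ) :
    ∀ m, m ≤ K → cont (aa P E K) (bb P E K) m = (-1)^m * ((m : ℚ)+1) := by
  intro m
  induction m using Nat.strong_induction_on with
  | _ m ih =>
    match m with
    | 0 => intro _; simp [cont]
    | 1 =>
      intro h
      show aa P E K 0 = _
      simp only [aa]
      rw [if_neg (by omega)]
      norm_num
    | (m+2) =>
      intro h
      rw [cont_step, ih (m+1) (by omega) (by omega), ih m (by omega) (by omega)]
      simp only [aa, bb]
      rw [if_neg (by omega), if_neg (by omega)]
      push_cast
      rw [pow_succ, pow_succ]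
      ring

private lemma contL2 (P E : ℚ) (hE : E = 1 ∨ E = -1) (K : ℕ) :
    ∀ j, j ≤ K+1 → cont (aa P E K) (bb P E K) (K+1+j)
      = (-1)^(K+j) * (E*P*((K:ℚ)+1+(j:ℚ)) - 1) := by
  intro j
  induction j using Nat.strong_induction_on with
  | _ j ih =>
    match j with
    | 0 =>
      intro _
      match K with
      | 0 =>
        show aa P E 0 0 = _
        simp [aa]
      | (m+1) =>
        rw [cont_step, contL1 P E (m+1) (m+1) (by omega), contL1 P E (m+1) m (by omega)]
        simp only [aa, bb]
        simp only [true_or, if_true]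
        rw [if_neg (by omega)]
        push_cast
        rw [pow_succ]
        ring
    | 1 =>
      intro _
      have h0 := ih 0 (by omega) (by omega)
      rw [show K+1+1 = K+2 from rfl, cont_step,
        show K+1+0 = K+1 from rfl] at *
      rw [h0, contL1 P E K K le_rfl]
      simp only [aa, bb]
      simp only [or_true, if_true]
      rcases hE with rfl | rfl <;> push_cast <;> rw [pow_succ] <;> ring
    | (j+2) =>
      intro h
      have h1 := ih (j+1) (by omega) (by omega)
      have h0 := ih j (by omega) (by omega)
      rw [show K+1+(j+2) = (K+1+j)+2 from rfl, cont_step,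
        show K+1+j+1 = K+1+(j+1) from rfl, h1, h0]
      simp only [aa, bb]
      rw [if_neg (by omega), if_neg (by omega)]
      rw [show K+(j+2) = (K+j)+2 from rfl, show K+(j+1) = (K+j)+1 from rfl]
      push_cast
      rw [pow_succ, pow_succ]
      ring
private lemma contM1 (P E : ℚ) (K : ℕ) :
    ∀ m, m < K → cont (fun i => aa P E K (i+1)) (fun i => bb P E K (i+1)) m
      = (-1)^m * ((m : ℚ)+1) := by
  intro m
  induction m using Nat.strong_induction_on with
  | _ m ih =>
    match m with
    | 0 => intro _; simp [cont]
    | 1 =>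
      intro h
      show aa P E K (0+1) = _
      simp only [aa]
      rw [if_neg (by omega)]
      norm_num
    | (m+2) =>
      intro h
      rw [cont_step, ih (m+1) (by omega) (by omega), ih m (by omega) (by omega)]
      simp only [aa, bb]
      rw [if_neg (by omega), if_neg (by omega)]
      push_cast
      rw [pow_succ, pow_succ]
      ring

private lemma contM2 (P E : ℚ) (hE : E = 1 ∨ E = -1) (K : ℕ) :
    ∀ j, j ≤ K+1 → cont (fun i => aa P E K (i+1)) (fun i => bb P E K (i+1)) (K+j)
      = (-1)^(K+1+j) * (E*P*((K:ℚ)+(j:ℚ)) - 1) := by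
  intro j
  induction j using Nat.strong_induction_on with
  | _ j ih =>
    match j with
    | 0 =>
      intro _
      match K with
      | 0 => simp [cont]
      | 1 =>
        show aa P E 1 (0+1) = _
        simp only [aa]
        simp only [true_or, if_true]
        norm_num
      | (m+2) =>
        rw [show m+2+0 = m+2 from rfl, cont_step, contM1 P E (m+2) (m+1) (by omega),
          contM1 P E (m+2) m (by omega)]
        simp only [aa, bb]
        simp only [true_or, if_true]
        rw [if_neg (by omega)]
        push_cast
        rw [pow_succ, pow_succ, pow_succ]
        ring
    | 1 =>
      intro _
      match K with
      | 0 =>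
        show aa P E 0 (0+1) = _
        simp only [aa]
        simp only [or_true, if_true]
        norm_num
      | (m+1) =>
        have h0 := ih 0 (by omega) (by omega)
        rw [show m+1+0 = m+1 from rfl] at h0
        rw [show m+1+1 = m+2 from rfl, cont_step, h0, contM1 P E (m+1) m (by omega)]
        simp only [aa, bb]
        simp only [or_true, if_true]
        rcases hE with rfl | rfl <;> push_cast <;> rw [pow_succ, pow_succ] <;> ring
    | (j+2) =>
      intro h
      have h1 := ih (j+1) (by omega) (by omega)
      have h0 := ih j (by omega) (by omega)
      rw [show K+(j+2) = (K+j)+2 from rfl, cont_step,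
        show K+j+1 = K+(j+1) from rfl, h1, h0]
      simp only [aa, bb]
      rw [if_neg (by omega), if_neg (by omega)]
      rw [show K+1+(j+2) = (K+1+j)+2 from rfl, show K+1+(j+1) = (K+1+j)+1 from rfl]
      push_cast
      rw [pow_succ, pow_succ]
      ring

private lemma adj_tri (a b : ℕ → ℚ) (n : ℕ) (hn : 0 < n) (z : Fin n) (hz : (z : ℕ) = 0) :
    (tri a b n).adjugate z z = cont (fun i => a (i+1)) (fun i => b (i+1)) (n-1) := by
  obtain ⟨m, rfl⟩ : ∃ m, n = m+1 := ⟨n-1, by omega⟩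
  have hz0 : z = 0 := Fin.ext (by simpa using hz)
  subst hz0
  rw [Matrix.adjugate_fin_succ_eq_det_submatrix]
  have hsub : (tri a b (m+1)).submatrix ((0 : Fin (m+1)).succAbove) ((0 : Fin (m+1)).succAbove)
      = tri (fun i => a (i+1)) (fun i => b (i+1)) m := by
    ext i j
    simp only [Fin.succAbove_zero, Matrix.submatrix_apply, tri, Matrix.of_apply, Fin.val_succ]
    split_ifs with h1 h2 h3 h4 h5 h6 <;> first | rfl | (exfalso; omega)
  rw [hsub, det_tri]
  norm_num
/-- Let `Q` be the `2k × 2k` tridiagonal matrix with diagonal entries `-2` except the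
entries at positions `k` and `k+1` (1-indexed), which equal `ε·p - 1`; off-diagonal
adjacent entries `1`, except the one between positions `k` and `k+1`, which equals
`ε·p` (same sign `ε = ±1` throughout), `p` an odd prime, `k ≥ 1`. Then
`det Q = 1 - 2kpε` (so `|det Q| = qr` with `qr = 2kp - ε`), and the `(1,1)` entry of
`-Q⁻¹` equals `(qr - p)/qr`. -/
theorem stmt19 (p k : ℕ) (hp : p.Prime) (hpodd : p ≠ 2) (hk : 1 ≤ k)
    (ε : ℤ) (hε : ε = 1 ∨ ε = -1)
    (Q : Matrix (Fin (2 * k)) (Fin (2 * k)) ℚ)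
    (hdiag : ∀ i : Fin (2 * k), Q i i =
      if (i : ℕ) = k - 1 ∨ (i : ℕ) = k then (ε : ℚ) * p - 1 else -2)
    (hadj : ∀ i j : Fin (2 * k), (i : ℕ) + 1 = (j : ℕ) →
      (Q i j = (if (i : ℕ) = k - 1 then (ε : ℚ) * p else 1) ∧ Q j i = Q i j))
    (hzero : ∀ i j : Fin (2 * k), (i : ℕ) ≠ (j : ℕ) → (i : ℕ) + 1 ≠ (j : ℕ) →
      (j : ℕ) + 1 ≠ (i : ℕ) → Q i j = 0) :
    Q.det = 1 - 2 * (k : ℚ) * p * ε ∧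
    (-Q⁻¹) ⟨0, by omega⟩ ⟨0, by omega⟩ =
      (2 * (k : ℚ) * p - ε - p) / (2 * (k : ℚ) * p - ε) := by
  obtain ⟨K, rfl⟩ : ∃ K, k = K + 1 := ⟨k - 1, by omega⟩
  set E : ℚ := (ε : ℚ) with hEdef
  set P : ℚ := (p : ℚ) with hPdef
  have hE : E = 1 ∨ E = -1 := by
    rcases hε with h | h <;> rw [hEdef, h] <;> norm_num
  have hP3 : (3:ℚ) ≤ P := by
    have h2 := hp.two_le
    have h3 : 3 ≤ p := by omega
    rw [hPdef]; exact_mod_cast h3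
  have hK0 : (0:ℚ) ≤ (K:ℚ) := Nat.cast_nonneg K
  have hP0 : (0:ℚ) ≤ P := by linarith
  have hQ : Q = tri (aa P E K) (bb P E K) (2*(K+1)) := by
    ext i j
    rcases Nat.lt_trichotomy (i:ℕ) (j:ℕ) with h | h | h
    · rcases eq_or_ne ((i:ℕ)+1) (j:ℕ) with h1 | h1
      · rw [(hadj i j h1).1]
        simp only [Nat.add_sub_cancel]
        simp only [tri, Matrix.of_apply, bb]
        rw [if_neg (show ¬((i:ℕ) = (j:ℕ)) by omega), if_pos h1]
      · rw [hzero i j (by omega) h1 (by omega)]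
        simp only [tri, Matrix.of_apply]
        rw [if_neg (by omega), if_neg (by omega), if_neg (by omega)]
    · have hij : i = j := Fin.ext h
      subst hij
      rw [hdiag i]
      simp [tri, aa]
    · rcases eq_or_ne ((j:ℕ)+1) (i:ℕ) with h1 | h1
      · rw [(hadj j i h1).2, (hadj j i h1).1]
        simp only [Nat.add_sub_cancel]
        simp only [tri, Matrix.of_apply, bb]
        rw [if_neg (show ¬((i:ℕ) = (j:ℕ)) by omega),
          if_neg (show ¬((i:ℕ) + 1 = (j:ℕ)) by omega), if_pos h1]
      · rw [hzero i j (by omega) (by omega) h1]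
        simp only [tri, Matrix.of_apply]
        rw [if_neg (by omega), if_neg (by omega), if_neg (by omega)]
  have hdet : Q.det = 1 - 2*((K:ℚ)+1)*P*E := by
    rw [hQ, det_tri]
    rw [show 2*(K+1) = K+1+(K+1) by ring]
    rw [contL2 P E hE K (K+1) le_rfl]
    rw [show K+(K+1) = 2*K+1 by ring]
    rw [pow_succ, pow_mul]
    push_cast
    ring
  have hadj00 : Q.adjugate ⟨0, by omega⟩ ⟨0, by omega⟩ = E*P*(2*(K:ℚ)+1) - 1 := by
    rw [hQ, adj_tri _ _ _ (by omega) _ rfl]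
    rw [show 2*(K+1)-1 = K+(K+1) by omega]
    rw [contM2 P E hE K (K+1) le_rfl]
    rw [show K+1+(K+1) = 2*(K+1) by ring, pow_mul]
    push_cast
    ring_nf
  refine ⟨?_, ?_⟩
  · rw [hdet]; push_cast; ring
  · rw [Matrix.inv_def]
    simp only [Matrix.neg_apply, Matrix.smul_apply, smul_eq_mul, Ring.inverse_eq_inv]
    rw [hdet, hadj00]
    have hKP : (0:ℚ) ≤ (K:ℚ) * P := mul_nonneg hK0 hP0
    rcases hE with h | h <;> rw [h] <;> push_cast
    · have hne : 2*((K:ℚ)+1)*P - 1 ≠ 0 := by nlinarith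
      rw [show (1 - 2*((K:ℚ)+1)*P*1) = -(2*((K:ℚ)+1)*P - 1) by ring, inv_neg]
      field_simp [hne]
      ring
    · have hne : 2*((K:ℚ)+1)*P - -1 ≠ 0 := by nlinarith
      rw [show (1 - 2*((K:ℚ)+1)*P*(-1)) = (2*((K:ℚ)+1)*P - -1) by ring]
      field_simp [hne]
      ring
end
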